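/- Let G(u) = G1(s) + G2(t) be a nondegenerate characteristic matrix, where s and t are disjoint sets of indeterminates (i.e., the tensor G is a concatenation of tensors G1 and G2 along the third axis). Then R[G] ≥ min over matrices T of R[G1(s) + G2(Ts)] + dim t. -/

import Mathlib

open scoped BigOperators

noncomputable def tRank (F : Type) [Field F] {I J K : Type} [Fintype I] [Fintype J] [Fintype K]
    (A : I → J → K → F) : ℕ :=
  sInf {m | ∃ x : Fin m → I → F, ∃ y : Fin m → J → F, ∃ z : Fin m → K → F,
    ∀ i j k, A i j k = ∑ t, x t i * y t j * z t k}

noncomputable def charMatrix {F : Type} [Field F] {I J K : Type} [Fintype K]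
    (A : I → J → K → F) : Matrix I J (MvPolynomial K F) :=
  Matrix.of fun i j => ∑ k, MvPolynomial.X k * MvPolynomial.C (A i j k)

noncomputable def colRank (F : Type) [Field F] {I J K : Type} [Fintype I] [Fintype J] [Fintype K]
    (A : I → J → K → F) : ℕ :=
  ((charMatrix A).map
    (algebraMap (MvPolynomial K F) (FractionRing (MvPolynomial K F)))).rank

noncomputable def rowRank (F : Type) [Field F] {I J K : Type} [Fintype I] [Fintype J] [Fintype K]
    (A : I → J → K → F) : ℕ :=
  (((charMatrix A).transpose).map
    (algebraMap (MvPolynomial K F) (FractionRing (MvPolynomial K F)))).rank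

/-- A tensor is nondegenerate if no nontrivial linear combination of its slices vanishes
and its characteristic matrix has full row and column rank. -/
def Nondeg (F : Type) [Field F] {I J K : Type} [Fintype I] [Fintype J] [Fintype K]
    (A : I → J → K → F) : Prop :=
  (∀ c : K → F, (∀ i j, ∑ k, c k * A i j k = 0) → c = 0) ∧
  rowRank F A = Fintype.card I ∧ colRank F A = Fintype.card J

/-- Concatenation of two tensors along the third axis. -/
def tConcat {F : Type} [Field F] {I J : Type} {m m' : ℕ}
    (A : I → J → Fin m → F) (B : I → J → Fin m' → F) : I → J → Fin (m + m') → F :=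
  fun i j k => Fin.addCases (fun l => A i j l) (fun e => B i j e) k

/-!
Take a CP decomposition of `tConcat G1 G2` of minimal length `r`, with third factors
`(z₁ t, z₂ t)`. Since the slices of `G2` are linearly independent, the vectors `z₂ t` span
`F^{c'}`, so `c'` of them form a basis. Choosing `T` so that `z₁ t + z₂ t ⬝ T = 0` on these `c'`
indices, the substitution `t ↦ T s` kills the corresponding rank-one terms and leaves a
decomposition of `G1(s) + G2(T s)` of length `r - c'`.
-/

section Decomposition

variable {F : Type} [Field F] {I J K ι : Type}

def IsCPDecomposition [Fintype ι] (A : I → J → K → F)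
    (x : ι → I → F) (y : ι → J → F) (z : ι → K → F) : Prop :=
  ∀ i j k, A i j k = ∑ t, x t i * y t j * z t k

theorem IsCPDecomposition.reindex {ι' : Type} [Fintype ι] [Fintype ι'] {A : I → J → K → F}
    {x : ι → I → F} {y : ι → J → F} {z : ι → K → F} (h : IsCPDecomposition A x y z)
    (e : ι' ≃ ι) : IsCPDecomposition A (x ∘ e) (y ∘ e) (z ∘ e) := fun i j k => by
  rw [h i j k, ← e.sum_comp]
  rfl

theorem IsCPDecomposition.sum_mul_eq [Fintype ι] [Fintype K] {A : I → J → K → F}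
    {x : ι → I → F} {y : ι → J → F} {z : ι → K → F} (h : IsCPDecomposition A x y z)
    (w : K → F) (i : I) (j : J) :
    ∑ k, w k * A i j k = ∑ t, x t i * y t j * (z t ⬝ᵥ w) := by
  simp only [h i j, dotProduct, Finset.mul_sum]
  rw [Finset.sum_comm]
  exact Finset.sum_congr rfl fun t _ => Finset.sum_congr rfl fun k _ => by ring

theorem isCPDecomposition_fibers [Fintype I] [Fintype J] [DecidableEq I] [DecidableEq J]
    (A : I → J → K → F) :
    IsCPDecomposition A (fun p : I × J => Pi.single p.1 1) (fun p => Pi.single p.2 1)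
      (fun p => A p.1 p.2) := fun i j k => by
  simp [Fintype.sum_prod_type, Pi.single_apply]

variable [Fintype I] [Fintype J] [Fintype K]

theorem tRank_le_card [Fintype ι] {A : I → J → K → F} {x : ι → I → F} {y : ι → J → F}
    {z : ι → K → F} (h : IsCPDecomposition A x y z) : tRank F A ≤ Fintype.card ι :=
  Nat.sInf_le ⟨_, _, _, h.reindex (Fintype.equivFin ι).symm⟩

theorem exists_isCPDecomposition_tRank (A : I → J → K → F) :
    ∃ (x : Fin (tRank F A) → I → F) (y : Fin (tRank F A) → J → F) (z : Fin (tRank F A) → K → F),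
      IsCPDecomposition A x y z := by
  classical
  exact Nat.sInf_mem (s := {m | ∃ (x : Fin m → I → F) (y : Fin m → J → F) (z : Fin m → K → F),
    IsCPDecomposition A x y z})
    ⟨_, _, _, _, (isCPDecomposition_fibers A).reindex (Fintype.equivFin _).symm⟩

end Decomposition

theorem span_range_eq_top_of_forall_dotProduct_eq_zero {F m n : Type} [Field F] [Fintype m]
    [Fintype n] {v : m → n → F} (hv : ∀ u, (∀ t, v t ⬝ᵥ u = 0) → u = 0) :
    Submodule.span F (Set.range v) = ⊤ := by
  have hinj : Function.Injective (Matrix.of v).mulVecLin :=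
    (injective_iff_map_eq_zero _).2 fun u hu => hv u (congrFun hu)
  apply Submodule.eq_top_of_finrank_eq
  rw [← LinearMap.finrank_range_of_inj hinj]
  exact (Matrix.of v).rank_eq_finrank_span_row.symm

theorem exists_finset_card_eq_finrank_forall_exists_linearMap_eq {F ι V W : Type} [Field F]
    [AddCommGroup V] [Module F V] [FiniteDimensional F V] [AddCommGroup W] [Module F W]
    {v : ι → V} (hv : Submodule.span F (Set.range v) = ⊤) :
    ∃ S : Finset ι, S.card = Module.finrank F V ∧
      ∀ f : ι → W, ∃ φ : V →ₗ[F] W, ∀ t ∈ S, φ (v t) = f t := by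
  obtain ⟨κ, a, ha, hspan, hli⟩ := exists_linearIndependent' F v
  let B := Module.Basis.mk hli (by rw [hspan, hv])
  have : Fintype κ := have := Module.Finite.finite_basis B; Fintype.ofFinite κ
  refine ⟨Finset.univ.map ⟨a, ha⟩, by simp [Module.finrank_eq_card_basis B], fun f => ?_⟩
  refine ⟨B.constr F (f ∘ a), fun t ht => ?_⟩
  obtain ⟨k, -, rfl⟩ := Finset.mem_map.1 ht
  simpa [B] using B.constr_basis F (f ∘ a) k

theorem exists_tRank_add_card_le {F ι I J K₁ K₂ : Type} [Field F] [Fintype ι] [Fintype I]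
    [Fintype J] [Fintype K₁] [Fintype K₂] {G₁ : I → J → K₁ → F} {G₂ : I → J → K₂ → F}
    (hG₂ : LinearIndependent F fun e i j => G₂ i j e) {x : ι → I → F} {y : ι → J → F}
    {z₁ : ι → K₁ → F} {z₂ : ι → K₂ → F} (h₁ : IsCPDecomposition G₁ x y z₁)
    (h₂ : IsCPDecomposition G₂ x y z₂) :
    ∃ T : K₂ → K₁ → F, tRank F (fun i j l => G₁ i j l + ∑ e, T e l * G₂ i j e) +
      Fintype.card K₂ ≤ Fintype.card ι := by
  classical
  have hspan : Submodule.span F (Set.range z₂) = ⊤ :=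
    span_range_eq_top_of_forall_dotProduct_eq_zero fun u hu => funext <|
      Fintype.linearIndependent_iff.1 hG₂ u (funext₂ fun i j => by simp [h₂.sum_mul_eq u i j, hu])
  obtain ⟨S, hS, hinterp⟩ :=
    exists_finset_card_eq_finrank_forall_exists_linearMap_eq (W := K₁ → F) hspan
  obtain ⟨φ, hφ⟩ := hinterp (-z₁)
  set T : K₂ → K₁ → F := fun e l => LinearMap.toMatrix' φ l e
  have hT (t : ι) (l : K₁) : z₂ t ⬝ᵥ (fun e => T e l) = φ (z₂ t) l := by
    rw [← LinearMap.toMatrix'_mulVec]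
    exact dotProduct_comm _ _
  have hdec : IsCPDecomposition (fun i j l => G₁ i j l + ∑ e, T e l * G₂ i j e)
      (fun t : {t // t ∉ S} => x t) (fun t => y t) (fun t => z₁ t + φ (z₂ t)) := by
    intro i j l
    change G₁ i j l + _ = ∑ t : {t // t ∉ S}, x t i * y t j * (z₁ t l + φ (z₂ t) l)
    rw [h₁ i j l, h₂.sum_mul_eq (fun e => T e l), ← Finset.sum_add_distrib,
      ← Fintype.sum_subtype_add_sum_subtype (· ∈ S), Finset.sum_eq_zero, zero_add]
    · simp only [hT, mul_add]
    · rintro ⟨t, ht⟩ -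
      simp [hT, hφ t ht]
  refine ⟨T, ?_⟩
  calc _ ≤ Fintype.card {t // t ∉ S} + S.card := by
        gcongr
        · exact tRank_le_card hdec
        · simp [hS]
    _ = Fintype.card ι := by
      simp [Fintype.card_subtype_compl, Nat.sub_add_cancel (Finset.card_le_univ S)]

theorem Nondeg.linearIndependent_slices {F I J K : Type} [Field F] [Fintype I] [Fintype J]
    [Fintype K] {A : I → J → K → F} (hA : Nondeg F A) :
    LinearIndependent F fun k i j => A i j k :=
  Fintype.linearIndependent_iff.2 fun g hg => congrFun <| hA.1 g fun i j => by
    simpa using congrFun₂ hg i j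

/-- Brockett–Dobkin partitioning, disjoint-variables (concatenation) case:
`R[G1(s) + G2(t)] ≥ min_T R[G1(s) + G2(Ts)] + dim t`. -/
theorem partitioning_disjoint_variables (F : Type) [Field F] {a b c c' : ℕ}
    (G1 : Fin a → Fin b → Fin c → F) (G2 : Fin a → Fin b → Fin c' → F)
    (hG : Nondeg F (tConcat G1 G2)) :
    sInf (Set.range fun T : Fin c' → Fin c → F =>
        tRank F (fun i j l => G1 i j l + ∑ e, T e l * G2 i j e)) + c' ≤
    tRank F (tConcat G1 G2) := by
  obtain ⟨x, y, z, hz⟩ := exists_isCPDecomposition_tRank (tConcat G1 G2)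
  have h₁ : IsCPDecomposition G1 x y fun t l => z t (Fin.castAdd c' l) := fun i j l => by
    simpa [tConcat] using hz i j (Fin.castAdd c' l)
  have h₂ : IsCPDecomposition G2 x y fun t e => z t (Fin.natAdd c e) := fun i j e => by
    simpa [tConcat] using hz i j (Fin.natAdd c e)
  have hG2 : LinearIndependent F fun e i j => G2 i j e := by
    simpa [tConcat, Function.comp_def] using
      hG.linearIndependent_slices.comp (Fin.natAdd c) (Fin.natAdd_injective c' c)
  obtain ⟨T, hT⟩ := exists_tRank_add_card_le hG2 h₁ h₂
  calc _ ≤ tRank F (fun i j l => G1 i j l + ∑ e, T e l * G2 i j e) + c' := by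
        gcongr
        exact Nat.sInf_le ⟨T, rfl⟩
    _ ≤ tRank F (tConcat G1 G2) := by simpa using hT
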